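/- arXiv:2008.02464 — 2 statements merged into one kernel-verified Lean document; each statement's English description precedes it below -/
import Mathlib

section
/- Let P be a regular Markov chain on state space [N] with stationary distribution π and spectral expansion λ. Let m ≥ 1, ℓ ≥ 0, t > 0, and let H_1,…,H_N ∈ ℂ^{m×m} satisfy ‖H_i‖₂ ≤ ℓ for all i and Σ_{i∈[N]} π_i H_i = 0. Let E be the block-diagonal matrix with i-th diagonal block exp(tH_i), let P̃ := P ⊗ I_m, and assume λ·exp(tℓ) < 1. Let z_0 ∈ U (so z_0^⊥ = 0) and define z_i := P̃ᵀ E* z_{i−1} for i ≥ 1. Then for every i ≥ 1, ‖z_i^∥‖_π ≤ ( (exp(tℓ) − tℓ) + λ(exp(tℓ)−1)² / (1 − λ·exp(tℓ)) ) · max_{0 ≤ j < i} ‖z_j^∥‖_π. -/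
open scoped BigOperators Kronecker ComplexOrder
open Matrix

/-- A (row-stochastic) Markov chain on a finite state space: nonnegative entries, rows sum to 1. -/
def IsMarkov {S : Type*} [Fintype S] (P : Matrix S S ℝ) : Prop :=
  (∀ i j, 0 ≤ P i j) ∧ ∀ i, ∑ j, P i j = 1

/-- A Markov chain is regular if some positive power has all entries strictly positive. -/
def IsRegularMC {S : Type*} [Fintype S] [DecidableEq S] (P : Matrix S S ℝ) : Prop :=
  ∃ k : ℕ, 0 < k ∧ ∀ i j, 0 < (P ^ k) i j

/-- `π` is a stationary distribution of `P`: strictly positive entries, sums to 1, `πᵀ P = πᵀ`. -/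
def IsStationaryMC {S : Type*} [Fintype S] (P : Matrix S S ℝ) (π : S → ℝ) : Prop :=
  (∀ i, 0 < π i) ∧ (∑ i, π i = 1) ∧ ∀ j, ∑ i, π i * P i j = π j

/-- A probability vector. -/
def IsProbVec {S : Type*} [Fintype S] (φ : S → ℝ) : Prop :=
  (∀ i, 0 ≤ φ i) ∧ ∑ i, φ i = 1

/-- The `π`-norm of a real vector `φ`: `‖φ‖_π = sqrt (∑ i, φ i ^ 2 / π i)`. -/
noncomputable def piNormR {S : Type*} [Fintype S] (π φ : S → ℝ) : ℝ :=
  Real.sqrt (∑ i, φ i ^ 2 / π i)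

/-- The `π`-inner product `⟨x, y⟩_π = y* Π⁻¹ x` on `ℂ^S`. -/
noncomputable def piInner {S : Type*} [Fintype S] (π : S → ℝ) (x y : S → ℂ) : ℂ :=
  ∑ i, (starRingEnd ℂ) (y i) * x i / (π i : ℂ)

/-- The `π`-norm of a complex vector. -/
noncomputable def piNorm {S : Type*} [Fintype S] (π : S → ℝ) (x : S → ℂ) : ℝ :=
  Real.sqrt (∑ i, ‖x i‖ ^ 2 / π i)

/-- The spectral expansion `λ(P)`: the supremum of `‖Pᵀ x‖_π / ‖x‖_π` over nonzero `x`
with `⟨x, π⟩_π = 0`. -/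
noncomputable def specExp {S : Type*} [Fintype S] (P : Matrix S S ℝ) (π : S → ℝ) : ℝ :=
  sSup {r : ℝ | ∃ x : S → ℂ, x ≠ 0 ∧ piInner π x (fun i => (π i : ℂ)) = 0 ∧
    r = piNorm π ((P.map Complex.ofReal)ᵀ *ᵥ x) / piNorm π x}

/-- The spectral (operator 2-)norm of a matrix. -/
noncomputable def spectralNormMat {𝕜 : Type*} [RCLike 𝕜] {m n : Type*} [Fintype m] [Fintype n]
    (A : Matrix m n 𝕜) : ℝ :=
  sSup {r : ℝ | ∃ x : n → 𝕜, x ≠ 0 ∧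
    r = Real.sqrt (∑ i, ‖(A *ᵥ x) i‖ ^ 2) / Real.sqrt (∑ j, ‖x j‖ ^ 2)}

/-- The probability that a `k`-step random walk on `P` started from `φ` follows the
trajectory `v`, i.e. `φ (v 1) * ∏ j, P (v j) (v (j+1))`. -/
noncomputable def walkWeight {S : Type*} [Fintype S] (P : Matrix S S ℝ) (φ : S → ℝ)
    {k : ℕ} (v : Fin k → S) : ℝ :=
  if h : 0 < k then
    φ (v ⟨0, h⟩) * ∏ j : Fin (k - 1),
      P (v ⟨(j : ℕ), by have := j.isLt; omega⟩) (v ⟨(j : ℕ) + 1, by have := j.isLt; omega⟩)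
  else 0

/-- The probability of an event `E` under a `k`-step random walk on `P` started from `φ`. -/
noncomputable def walkProb {S : Type*} [Fintype S] (P : Matrix S S ℝ) (φ : S → ℝ)
    {k : ℕ} (E : Set (Fin k → S)) : ℝ :=
  ∑ v : Fin k → S, E.indicator (fun u => walkWeight P φ u) v

/-- The matrix exponential, `exp A = ∑ A^k / k!`. -/
noncomputable def mexp {m : Type*} [Fintype m] [DecidableEq m]
    (A : Matrix m m ℂ) : Matrix m m ℂ :=
  ∑' k : ℕ, ((k.factorial : ℂ)⁻¹) • A ^ k

/-- The block-diagonal matrix `diag (M 1, …, M N)`. -/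
def blockDiag' {S m : Type*} [DecidableEq S] (M : S → Matrix m m ℂ) :
    Matrix (S × m) (S × m) ℂ :=
  Matrix.of fun p q => if p.1 = q.1 then M p.1 p.2 q.2 else 0

/-- The `π`-inner product `⟨x, y⟩_π = y* (Π⁻¹ ⊗ I_m) x` on `ℂ^{N m}`. -/
noncomputable def piInnerKron {N m : ℕ} (π : Fin N → ℝ) (x y : Fin N × Fin m → ℂ) : ℂ :=
  ∑ p, (starRingEnd ℂ) (y p) * x p / (π p.1 : ℂ)

/-- The `π`-norm on `ℂ^{N m}`. -/
noncomputable def piNormKron {N m : ℕ} (π : Fin N → ℝ) (x : Fin N × Fin m → ℂ) : ℝ :=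
  Real.sqrt (∑ p, ‖x p‖ ^ 2 / π p.1)

/-- Membership in the subspace `U = {π ⊗ w : w ∈ ℂ^m}`. -/
def memU {N m : ℕ} (π : Fin N → ℝ) (x : Fin N × Fin m → ℂ) : Prop :=
  ∃ w : Fin m → ℂ, ∀ p, x p = (π p.1 : ℂ) * w p.2

/-- `π`-orthogonality to the subspace `U = {π ⊗ w : w ∈ ℂ^m}`. -/
noncomputable def perpU {N m : ℕ} (π : Fin N → ℝ) (x : Fin N × Fin m → ℂ) : Prop :=
  ∀ w : Fin m → ℂ, piInnerKron π x (fun p => (π p.1 : ℂ) * w p.2) = 0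

/-!
Write `zᵢ = π ⊗ wᵢ + zᵢ^⊥` with `wᵢ` the column sum of `zᵢ`, and put `aᵢ = ‖wᵢ‖ = ‖zᵢ^∥‖_π`,
`bᵢ = ‖zᵢ^⊥‖_π`, `e = exp (t ℓ)`. The map `P̃ᵀ` preserves column sums, fixes `U` and shrinks
`U^⊥` by the factor `λ`; `E*` is block diagonal with blocks `Kᵥ` satisfying `‖Kᵥ - 1‖ ≤ e - 1`
and, because `∑ πᵥ Hᵥ = 0` kills the first-order Taylor terms, `‖∑ πᵥ Kᵥ‖ ≤ e - t ℓ`. Hence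
  `aᵢ₊₁ ≤ (e - t ℓ) aᵢ + (e - 1) bᵢ` and `bᵢ₊₁ ≤ λ e bᵢ + λ (e - 1) aᵢ`.
As `b₀ = 0` and `λ e < 1`, induction gives `bᵢ ≤ λ (e - 1) / (1 - λ e) · max_{j < i} aⱼ`, and
the first recurrence turns this into the claim.
-/

open Finset WithLp Function
open scoped Nat Matrix.Norms.L2Operator

namespace MatrixChernoff

section MatrixExp

theorem norm_tsum_expSeries_sub_le {𝔸 : Type*} [NormedRing 𝔸] [NormedAlgebra ℂ 𝔸]
    [CompleteSpace 𝔸] {a : 𝔸} {L : ℝ} (ha : ‖a‖ ≤ L) {n : ℕ} (hn : 0 < n) :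
    ‖(∑' k, (k !⁻¹ : ℂ) • a ^ k) - ∑ k ∈ range n, (k !⁻¹ : ℂ) • a ^ k‖
      ≤ Real.exp L - ∑ k ∈ range n, L ^ k / k ! := by
  have hL : HasSum (fun k => L ^ (k + n) / (k + n)!)
      (Real.exp L - ∑ k ∈ range n, L ^ k / k !) := by
    refine (hasSum_nat_add_iff' n).mpr ?_
    rw [Real.exp_eq_exp_ℝ]
    exact NormedSpace.expSeries_div_hasSum_exp L
  have htail := (hasSum_nat_add_iff' n).mpr (NormedSpace.expSeries_summable' (𝕂 := ℂ) a).hasSum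
  refine htail.norm_le_of_bounded hL fun k => ?_
  rw [norm_smul, norm_inv, Complex.norm_natCast, inv_mul_eq_div]
  gcongr
  exact (norm_pow_le' a (by omega)).trans (pow_le_pow_left₀ (norm_nonneg a) ha _)

variable {n : Type*} [Fintype n] [DecidableEq n]

theorem norm_mexp_sub_one_le {A : Matrix n n ℂ} {L : ℝ} (hA : ‖A‖ ≤ L) :
    ‖mexp A - 1‖ ≤ Real.exp L - 1 := by
  simpa [mexp] using norm_tsum_expSeries_sub_le hA one_pos

theorem norm_mexp_sub_one_sub_le {A : Matrix n n ℂ} {L : ℝ} (hA : ‖A‖ ≤ L) :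
    ‖mexp A - 1 - A‖ ≤ Real.exp L - 1 - L := by
  -- `0 + 1 + 1` rather than `2`, so that `sum_range_succ` applies
  have h := norm_tsum_expSeries_sub_le hA (n := 0 + 1 + 1) (by norm_num)
  simp only [sum_range_succ, sum_range_zero] at h
  simpa [mexp, sub_sub] using h

theorem l2_opNorm_one_le : ‖(1 : Matrix n n ℂ)‖ ≤ 1 := by
  rw [Matrix.cstar_norm_def, map_one]
  exact ContinuousLinearMap.norm_id_le

theorem norm_toLp_mulVec_le (A : Matrix n n ℂ) (w : n → ℂ) :
    ‖toLp 2 (A *ᵥ w)‖ ≤ ‖A‖ * ‖toLp 2 w‖ :=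
  A.l2_opNorm_mulVec (toLp 2 w)

theorem l2_opNorm_le_of_spectralNormMat_le {A : Matrix n n ℂ} {ℓ : ℝ}
    (h : spectralNormMat A ≤ ℓ) : ‖A‖ ≤ ℓ := by
  have hratio : ∀ x : n → ℂ, x ≠ 0 →
      Real.sqrt (∑ i, ‖(A *ᵥ x) i‖ ^ 2) / Real.sqrt (∑ j, ‖x j‖ ^ 2)
        = ‖toLp 2 (A *ᵥ x)‖ / ‖toLp 2 x‖ := by
    intro x _; simp [EuclideanSpace.norm_eq]
  have hbdd : BddAbove {r : ℝ | ∃ x : n → ℂ, x ≠ 0 ∧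
      r = Real.sqrt (∑ i, ‖(A *ᵥ x) i‖ ^ 2) / Real.sqrt (∑ j, ‖x j‖ ^ 2)} := by
    refine ⟨‖A‖, ?_⟩
    rintro r ⟨x, hx, rfl⟩
    rw [hratio x hx]
    exact div_le_of_le_mul₀ (norm_nonneg _) (norm_nonneg _) (norm_toLp_mulVec_le A x)
  have h0 : 0 ≤ spectralNormMat A := Real.sSup_nonneg fun r ⟨x, _, hr⟩ => hr ▸ by positivity
  rw [Matrix.cstar_norm_def]
  refine ContinuousLinearMap.opNorm_le_bound _ (h0.trans h) fun x => ?_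
  obtain rfl | hx := eq_or_ne x 0
  · simp
  have hx' : ofLp x ≠ 0 := by simpa using hx
  have hle := le_csSup hbdd ⟨ofLp x, hx', rfl⟩
  rw [hratio _ hx', toLp_ofLp, div_le_iff₀ (norm_pos_iff.mpr hx)] at hle
  have hle' : ‖toLp 2 (A *ᵥ ofLp x)‖ ≤ spectralNormMat A * ‖x‖ := hle
  exact hle'.trans (by gcongr)

theorem norm_conjTranspose_mexp_sub_one_le {A : Matrix n n ℂ} {L : ℝ} (hA : ‖A‖ ≤ L) :
    ‖(mexp A)ᴴ - 1‖ ≤ Real.exp L - 1 := by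
  rw [← Matrix.conjTranspose_one, ← Matrix.conjTranspose_sub, Matrix.l2_opNorm_conjTranspose]
  exact norm_mexp_sub_one_le hA

theorem norm_sum_smul_conjTranspose_mexp_le {ι : Type*} [Fintype ι] {π : ι → ℝ}
    (hπ : ∀ i, 0 ≤ π i) (hπ1 : ∑ i, π i = 1) {A : ι → Matrix n n ℂ} {L : ℝ}
    (hA : ∀ i, ‖A i‖ ≤ L) (hmean : ∑ i, (π i : ℂ) • A i = 0) :
    ‖∑ i, (π i : ℂ) • (mexp (A i))ᴴ‖ ≤ Real.exp L - L := by
  have hsplit : ∑ i, (π i : ℂ) • mexp (A i) = ∑ i, (π i : ℂ) • (mexp (A i) - 1 - A i) + 1 := by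
    simp only [smul_sub, sum_sub_distrib, hmean, ← sum_smul, ← Complex.ofReal_sum, hπ1]
    simp
  have hconj : ∑ i, (π i : ℂ) • (mexp (A i))ᴴ = (∑ i, (π i : ℂ) • mexp (A i))ᴴ := by
    simp [Matrix.conjTranspose_sum, Matrix.conjTranspose_smul]
  rw [hconj, Matrix.l2_opNorm_conjTranspose, hsplit]
  calc _ ≤ ∑ i, π i * (Real.exp L - 1 - L) + 1 := by
        refine (norm_add_le _ _).trans (add_le_add ?_ l2_opNorm_one_le)
        refine (norm_sum_le _ _).trans (sum_le_sum fun i _ => ?_)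
        rw [norm_smul, Complex.norm_real, Real.norm_of_nonneg (hπ i)]
        exact mul_le_mul_of_nonneg_left (norm_mexp_sub_one_sub_le (hA i)) (hπ i)
    _ = Real.exp L - L := by rw [← sum_mul, hπ1]; ring

end MatrixExp

section Spectral
variable {S : Type*} [Fintype S] {P : Matrix S S ℝ} {π : S → ℝ}

theorem norm_sq_transpose_mulVec_div_le (hP : IsMarkov P) (hπ : IsStationaryMC P π)
    (x : S → ℂ) (j : S) :
    ‖((P.map Complex.ofReal)ᵀ *ᵥ x) j‖ ^ 2 / π j ≤ ∑ i, P i j * (‖x i‖ ^ 2 / π i) := by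
  obtain ⟨hPnn, -⟩ := hP
  obtain ⟨hπpos, -, hπstat⟩ := hπ
  have hnorm : ‖((P.map Complex.ofReal)ᵀ *ᵥ x) j‖ ≤ ∑ i, P i j * ‖x i‖ :=
    (norm_sum_le _ _).trans_eq <| sum_congr rfl fun i _ => by
      simp [abs_of_nonneg (hPnn i j)]
  have hcs : (∑ i, P i j * ‖x i‖) ^ 2 ≤ (∑ i, π i * P i j) * ∑ i, P i j * (‖x i‖ ^ 2 / π i) :=
    sum_sq_le_sum_mul_sum_of_sq_le_mul _ (fun i _ => mul_nonneg (hπpos i).le (hPnn i j))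
      (fun i _ => mul_nonneg (hPnn i j) (div_nonneg (sq_nonneg _) (hπpos i).le))
      fun i _ => le_of_eq <| by field_simp [(hπpos i).ne']
  rw [hπstat j] at hcs
  rw [div_le_iff₀' (hπpos j)]
  exact (pow_le_pow_left₀ (norm_nonneg _) hnorm 2).trans hcs

theorem piNorm_transpose_mulVec_le (hP : IsMarkov P) (hπ : IsStationaryMC P π) (x : S → ℂ) :
    piNorm π ((P.map Complex.ofReal)ᵀ *ᵥ x) ≤ piNorm π x := by
  refine Real.sqrt_le_sqrt ?_
  calc ∑ j, ‖((P.map Complex.ofReal)ᵀ *ᵥ x) j‖ ^ 2 / π j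
      ≤ ∑ j, ∑ i, P i j * (‖x i‖ ^ 2 / π i) :=
        sum_le_sum fun j _ => norm_sq_transpose_mulVec_div_le hP hπ x j
    _ = ∑ i, ‖x i‖ ^ 2 / π i := by
        rw [sum_comm]
        simp [← sum_mul, hP.2]

theorem piNorm_pos (hπ : ∀ i, 0 < π i) {x : S → ℂ} (hx : x ≠ 0) : 0 < piNorm π x := by
  obtain ⟨i, hi⟩ := Function.ne_iff.mp hx
  refine Real.sqrt_pos.mpr <| (div_pos (pow_pos (norm_pos_iff.mpr hi) 2) (hπ i)).trans_le ?_
  exact single_le_sum (f := fun i => ‖x i‖ ^ 2 / π i)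
    (fun i _ => div_nonneg (sq_nonneg _) (hπ i).le) (mem_univ i)

theorem piNorm_transpose_mulVec_le_specExp (hP : IsMarkov P) (hπ : IsStationaryMC P π)
    {x : S → ℂ} (hx : ∑ i, x i = 0) :
    piNorm π ((P.map Complex.ofReal)ᵀ *ᵥ x) ≤ specExp P π * piNorm π x := by
  obtain rfl | hx0 := eq_or_ne x 0
  · simp [piNorm]
  have hpos := piNorm_pos hπ.1 hx0
  have hbdd : BddAbove {r : ℝ | ∃ y : S → ℂ, y ≠ 0 ∧ piInner π y (fun i => (π i : ℂ)) = 0 ∧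
      r = piNorm π ((P.map Complex.ofReal)ᵀ *ᵥ y) / piNorm π y} := by
    refine ⟨1, ?_⟩
    rintro r ⟨y, hy, -, rfl⟩
    exact div_le_one_of_le₀ (piNorm_transpose_mulVec_le hP hπ y) (Real.sqrt_nonneg _)
  have horth : piInner π x (fun i => (π i : ℂ)) = 0 := by
    simpa [piInner, mul_div_cancel_left₀ _ (Complex.ofReal_ne_zero.mpr (hπ.1 _).ne')] using hx
  rw [← div_le_iff₀ hpos]
  exact le_csSup hbdd ⟨x, hx0, horth, rfl⟩

theorem specExp_nonneg (P : Matrix S S ℝ) (π : S → ℝ) : 0 ≤ specExp P π :=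
  Real.sSup_nonneg fun _ ⟨_, _, _, hr⟩ => hr ▸ div_nonneg (Real.sqrt_nonneg _) (Real.sqrt_nonneg _)

end Spectral

section Blocks
variable {ι κ : Type*}

/-- `π ⊗ w`, the elements of `U`. -/
def piTensor (π : ι → ℝ) (w : κ → ℂ) : ι × κ → ℂ := fun p => (π p.1 : ℂ) * w p.2

theorem curry_piTensor (π : ι → ℝ) (w : κ → ℂ) (i : ι) :
    curry (piTensor π w) i = (π i : ℂ) • w := by
  ext b; simp [piTensor]

theorem conjTranspose_blockDiag' [DecidableEq ι] (M : ι → Matrix κ κ ℂ) :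
    (blockDiag' M)ᴴ = blockDiag' fun i => (M i)ᴴ := by
  ext p q
  simp only [_root_.blockDiag', Matrix.conjTranspose_apply, Matrix.of_apply]
  split_ifs with h h' h' <;> simp_all [eq_comm]

variable [Fintype ι]

def colSum (x : ι × κ → ℂ) : κ → ℂ := fun b => ∑ i, x (i, b)

/-- When `∑ π = 1`, the `π`-orthogonal projection onto `U` is `x ↦ π ⊗ colSum x`, so this is
`x^⊥`. -/
def perpPart (π : ι → ℝ) (x : ι × κ → ℂ) : ι × κ → ℂ := x - piTensor π (colSum x)

theorem colSum_eq_sum_curry (x : ι × κ → ℂ) : colSum x = ∑ i, curry x i := by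
  ext b; simp [colSum]

theorem colSum_add (x y : ι × κ → ℂ) : colSum (x + y) = colSum x + colSum y := by
  ext b; simp [colSum, sum_add_distrib]

theorem colSum_piTensor {π : ι → ℝ} (hπ : ∑ i, π i = 1) (w : κ → ℂ) :
    colSum (piTensor π w) = w := by
  ext b; simp [colSum, piTensor, ← sum_mul, ← Complex.ofReal_sum, hπ]

theorem colSum_perpPart {π : ι → ℝ} (hπ : ∑ i, π i = 1) (x : ι × κ → ℂ) :
    colSum (perpPart π x) = 0 := by
  ext b
  simp [perpPart, colSum, piTensor, sum_sub_distrib, ← sum_mul, ← Complex.ofReal_sum, hπ]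

theorem perpPart_add (π : ι → ℝ) (x y : ι × κ → ℂ) :
    perpPart π (x + y) = perpPart π x + perpPart π y := by
  ext p; simp [perpPart, colSum_add, piTensor]; ring

theorem perpPart_piTensor {π : ι → ℝ} (hπ : ∑ i, π i = 1) (w : κ → ℂ) :
    perpPart π (piTensor π w) = 0 := by
  simp [perpPart, colSum_piTensor hπ]

theorem piTensor_add_perpPart (π : ι → ℝ) (x : ι × κ → ℂ) :
    piTensor π (colSum x) + perpPart π x = x := by
  simp [perpPart]

theorem curry_blockDiag'_mulVec [DecidableEq ι] [Fintype κ] (K : ι → Matrix κ κ ℂ)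
    (x : ι × κ → ℂ) (i : ι) :
    curry (blockDiag' K *ᵥ x) i = K i *ᵥ curry x i := by
  ext b
  simp [Matrix.mulVec, dotProduct, _root_.blockDiag', Fintype.sum_prod_type, curry]

end Blocks

section Kronecker
variable {ι κ : Type*} [Fintype ι] [Fintype κ] [DecidableEq κ] {P : Matrix ι ι ℝ}

theorem kronecker_transpose_mulVec_apply (y : ι × κ → ℂ) (k : ι) (b : κ) :
    ((P.map Complex.ofReal ⊗ₖ (1 : Matrix κ κ ℂ))ᵀ *ᵥ y) (k, b)
      = ((P.map Complex.ofReal)ᵀ *ᵥ fun j => y (j, b)) k := by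
  simp [Matrix.mulVec, dotProduct, Matrix.one_apply, Fintype.sum_prod_type]

theorem colSum_kronecker_transpose_mulVec (hP : ∀ i, ∑ j, P i j = 1) (y : ι × κ → ℂ) :
    colSum ((P.map Complex.ofReal ⊗ₖ (1 : Matrix κ κ ℂ))ᵀ *ᵥ y) = colSum y := by
  ext b
  simp only [colSum, kronecker_transpose_mulVec_apply]
  simp only [Matrix.mulVec, dotProduct, Matrix.transpose_apply, Matrix.map_apply]
  rw [sum_comm]
  simp [← sum_mul, ← Complex.ofReal_sum, hP]

theorem kronecker_transpose_mulVec_piTensor {π : ι → ℝ} (hπ : ∀ j, ∑ i, π i * P i j = π j)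
    (w : κ → ℂ) :
    (P.map Complex.ofReal ⊗ₖ (1 : Matrix κ κ ℂ))ᵀ *ᵥ piTensor π w = piTensor π w := by
  ext ⟨k, b⟩
  rw [kronecker_transpose_mulVec_apply]
  simp only [Matrix.mulVec, dotProduct, Matrix.transpose_apply, Matrix.map_apply, piTensor]
  rw [← hπ k]
  push_cast
  rw [sum_mul]
  exact sum_congr rfl fun i _ => by ring

theorem perpPart_kronecker_transpose_mulVec (hP : ∀ i, ∑ j, P i j = 1) {π : ι → ℝ}
    (hπ : ∀ j, ∑ i, π i * P i j = π j) (y : ι × κ → ℂ) :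
    perpPart π ((P.map Complex.ofReal ⊗ₖ (1 : Matrix κ κ ℂ))ᵀ *ᵥ y)
      = (P.map Complex.ofReal ⊗ₖ (1 : Matrix κ κ ℂ))ᵀ *ᵥ perpPart π y := by
  rw [perpPart, perpPart, Matrix.mulVec_sub, colSum_kronecker_transpose_mulVec hP,
    kronecker_transpose_mulVec_piTensor hπ]

end Kronecker

theorem sum_norm_sub_mul_sum_sq_div {ι : Type*} [Fintype ι] {π : ι → ℝ} (hπ : ∀ i, 0 < π i)
    (hπ1 : ∑ i, π i = 1) (x : ι → ℂ) :
    ∑ i, ‖x i - π i * ∑ j, x j‖ ^ 2 / π i = ∑ i, ‖x i‖ ^ 2 / π i - ‖∑ j, x j‖ ^ 2 := by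
  set c := ∑ j, x j
  have hterm : ∀ i, ‖x i - π i * c‖ ^ 2 / π i
      = ‖x i‖ ^ 2 / π i + π i * ‖c‖ ^ 2 - 2 * (x i * (starRingEnd ℂ) c).re := by
    intro i
    simp only [Complex.sq_norm, Complex.normSq_sub, Complex.normSq_ofReal,
      map_mul, Complex.conj_ofReal]
    have : (x i * ((π i : ℂ) * (starRingEnd ℂ) c)).re = π i * (x i * (starRingEnd ℂ) c).re := by
      rw [mul_left_comm, Complex.re_ofReal_mul]
    rw [this]
    field_simp [(hπ i).ne']
  have hcross : ∑ i, (x i * (starRingEnd ℂ) c).re = ‖c‖ ^ 2 := by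
    rw [← Complex.re_sum, ← sum_mul, Complex.mul_conj, Complex.ofReal_re, Complex.sq_norm]
  simp only [hterm, sum_sub_distrib, sum_add_distrib, ← sum_mul, hπ1, ← mul_sum, hcross]
  ring

section PiNormKron
variable {N m : ℕ} {π : Fin N → ℝ}

theorem piNormKron_eq_sqrt_sum_curry (x : Fin N × Fin m → ℂ) :
    piNormKron π x = √(∑ i, ‖toLp 2 (curry x i)‖ ^ 2 / π i) := by
  simp [piNormKron, Fintype.sum_prod_type, EuclideanSpace.norm_sq_eq, sum_div]

theorem piNormKron_eq_sqrt_sum_piNorm (hπ : ∀ i, 0 ≤ π i) (x : Fin N × Fin m → ℂ) :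
    piNormKron π x = √(∑ b, piNorm π (fun i => x (i, b)) ^ 2) := by
  simp only [piNormKron, piNorm, Fintype.sum_prod_type_right]
  congr 1
  exact sum_congr rfl fun b _ =>
    (Real.sq_sqrt (sum_nonneg fun i _ => div_nonneg (sq_nonneg _) (hπ i))).symm

theorem piNormKron_eq_norm (hπ : ∀ i, 0 ≤ π i) (x : Fin N × Fin m → ℂ) :
    piNormKron π x = ‖toLp 2 (fun p => (((√(π p.1))⁻¹ : ℝ) : ℂ) * x p)‖ := by
  rw [EuclideanSpace.norm_eq, piNormKron]
  congr 1
  refine sum_congr rfl fun p _ => ?_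
  simp [mul_pow, Real.sq_sqrt (hπ p.1), div_eq_inv_mul]

theorem piNormKron_add_le (hπ : ∀ i, 0 ≤ π i) (x y : Fin N × Fin m → ℂ) :
    piNormKron π (x + y) ≤ piNormKron π x + piNormKron π y := by
  simp only [piNormKron_eq_norm hπ]
  refine le_of_eq_of_le ?_ (norm_add_le _ _)
  rw [← toLp_add]
  congr 2
  ext p
  simp [mul_add]

theorem piNormKron_le_of_norm_curry_le (hπ : ∀ i, 0 ≤ π i) {x y : Fin N × Fin m → ℂ} {c : ℝ}
    (hc : 0 ≤ c) (h : ∀ i, ‖toLp 2 (curry x i)‖ ≤ c * ‖toLp 2 (curry y i)‖) :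
    piNormKron π x ≤ c * piNormKron π y := by
  rw [piNormKron_eq_sqrt_sum_curry, piNormKron_eq_sqrt_sum_curry, ← Real.sqrt_sq hc,
    ← Real.sqrt_mul (sq_nonneg c), mul_sum]
  refine Real.sqrt_le_sqrt (sum_le_sum fun i _ => ?_)
  rw [← mul_div_assoc, ← mul_pow]
  gcongr
  · exact hπ i
  · exact h i

theorem piNormKron_piTensor (hπ : ∀ i, 0 < π i) (hπ1 : ∑ i, π i = 1) (w : Fin m → ℂ) :
    piNormKron π (piTensor π w) = ‖toLp 2 w‖ := by
  have hrow : ∀ i, ‖toLp 2 (curry (piTensor π w) i)‖ ^ 2 / π i = π i * ‖toLp 2 w‖ ^ 2 := by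
    intro i
    rw [curry_piTensor, toLp_smul, norm_smul, Complex.norm_real, Real.norm_of_nonneg (hπ i).le]
    field_simp [(hπ i).ne']
  rw [piNormKron_eq_sqrt_sum_curry]
  simp only [hrow, ← sum_mul, hπ1, one_mul, Real.sqrt_sq (norm_nonneg _)]

theorem sum_norm_curry_le_piNormKron (hπ : ∀ i, 0 < π i) (hπ1 : ∑ i, π i = 1)
    (x : Fin N × Fin m → ℂ) :
    ∑ i, ‖toLp 2 (curry x i)‖ ≤ piNormKron π x := by
  have hcs : (∑ i, ‖toLp 2 (curry x i)‖) ^ 2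
      ≤ (∑ i, π i) * ∑ i, ‖toLp 2 (curry x i)‖ ^ 2 / π i :=
    sum_sq_le_sum_mul_sum_of_sq_le_mul _ (fun i _ => (hπ i).le)
      (fun i _ => div_nonneg (sq_nonneg _) (hπ i).le)
      fun i _ => le_of_eq <| by field_simp [(hπ i).ne']
  rw [hπ1, one_mul] at hcs
  rw [piNormKron_eq_sqrt_sum_curry]
  exact Real.le_sqrt_of_sq_le hcs

theorem piNormKron_perpPart_le (hπ : ∀ i, 0 < π i) (hπ1 : ∑ i, π i = 1)
    (x : Fin N × Fin m → ℂ) :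
    piNormKron π (perpPart π x) ≤ piNormKron π x := by
  refine Real.sqrt_le_sqrt ?_
  simp only [Fintype.sum_prod_type_right]
  refine sum_le_sum fun b _ => ?_
  have := sum_norm_sub_mul_sum_sq_div hπ hπ1 fun i => x (i, b)
  simp only [perpPart, piTensor, colSum, Pi.sub_apply]
  linarith [sq_nonneg ‖∑ j, x (j, b)‖]

theorem piNormKron_kronecker_transpose_mulVec_le {P : Matrix (Fin N) (Fin N) ℝ}
    (hP : IsMarkov P) (hπ : IsStationaryMC P π) {x : Fin N × Fin m → ℂ} (hx : colSum x = 0) :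
    piNormKron π ((P.map Complex.ofReal ⊗ₖ (1 : Matrix (Fin m) (Fin m) ℂ))ᵀ *ᵥ x)
      ≤ specExp P π * piNormKron π x := by
  have hπ0 : ∀ i, 0 ≤ π i := fun i => (hπ.1 i).le
  have hspec := specExp_nonneg P π
  simp only [piNormKron_eq_sqrt_sum_piNorm hπ0, kronecker_transpose_mulVec_apply]
  rw [← Real.sqrt_sq hspec, ← Real.sqrt_mul (sq_nonneg _), mul_sum]
  refine Real.sqrt_le_sqrt (sum_le_sum fun b _ => ?_)
  rw [← mul_pow]
  exact pow_le_pow_left₀ (Real.sqrt_nonneg _)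
    (piNorm_transpose_mulVec_le_specExp hP hπ (congrFun hx b)) 2

end PiNormKron

section Step
variable {N m : ℕ} {π : Fin N → ℝ} {K : Fin N → Matrix (Fin m) (Fin m) ℂ} {β : ℝ}

theorem curry_eq_smul_colSum_add_curry_perpPart (x : Fin N × Fin m → ℂ) (i : Fin N) :
    curry x i = (π i : ℂ) • colSum x + curry (perpPart π x) i := by
  ext b; simp [perpPart, piTensor]

theorem colSum_blockDiag'_mulVec (hπ1 : ∑ i, π i = 1) (K : Fin N → Matrix (Fin m) (Fin m) ℂ)
    (x : Fin N × Fin m → ℂ) :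
    colSum (blockDiag' K *ᵥ x)
      = (∑ i, (π i : ℂ) • K i) *ᵥ colSum x + ∑ i, (K i - 1) *ᵥ curry (perpPart π x) i := by
  have hu : ∑ i, curry (perpPart π x) i = 0 := by
    rw [← colSum_eq_sum_curry, colSum_perpPart hπ1]
  rw [colSum_eq_sum_curry (blockDiag' K *ᵥ x)]
  simp only [curry_blockDiag'_mulVec, Matrix.sub_mulVec, Matrix.one_mulVec,
    sum_sub_distrib, hu, sub_zero, Matrix.sum_mulVec, Matrix.smul_mulVec]
  conv_lhs => enter [2, i]; rw [curry_eq_smul_colSum_add_curry_perpPart (π := π) x i]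
  simp only [Matrix.mulVec_add, Matrix.mulVec_smul, sum_add_distrib]

theorem norm_colSum_blockDiag'_mulVec_le (hπ : ∀ i, 0 < π i) (hπ1 : ∑ i, π i = 1) {α : ℝ}
    (hKmean : ‖∑ i, (π i : ℂ) • K i‖ ≤ α) (hK : ∀ i, ‖K i - 1‖ ≤ β) (hβ : 0 ≤ β)
    (x : Fin N × Fin m → ℂ) :
    ‖toLp 2 (colSum (blockDiag' K *ᵥ x))‖
      ≤ α * ‖toLp 2 (colSum x)‖ + β * piNormKron π (perpPart π x) := by
  rw [colSum_blockDiag'_mulVec hπ1, toLp_add, toLp_sum]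
  refine (norm_add_le _ _).trans (add_le_add ?_ ?_)
  · exact (norm_toLp_mulVec_le _ _).trans (by gcongr)
  calc _ ≤ ∑ i, β * ‖toLp 2 (curry (perpPart π x) i)‖ :=
        (norm_sum_le _ _).trans <| sum_le_sum fun i _ =>
          (norm_toLp_mulVec_le _ _).trans (by gcongr; exact hK i)
    _ ≤ β * piNormKron π (perpPart π x) := by
        rw [← mul_sum]
        exact mul_le_mul_of_nonneg_left (sum_norm_curry_le_piNormKron hπ hπ1 _) hβ

theorem blockDiag'_mulVec_eq_add (K : Fin N → Matrix (Fin m) (Fin m) ℂ) (x : Fin N × Fin m → ℂ) :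
    blockDiag' K *ᵥ x = x + blockDiag' (fun i => K i - 1) *ᵥ x := by
  ext ⟨i, b⟩
  have h := congrFun (curry_blockDiag'_mulVec (fun i => K i - 1) x i) b
  have h' := congrFun (curry_blockDiag'_mulVec K x i) b
  rw [Matrix.sub_mulVec, Matrix.one_mulVec] at h
  simp only [curry, Pi.sub_apply] at h h'
  rw [Pi.add_apply, h, h']
  ring

theorem piNormKron_perpPart_blockDiag'_mulVec_le (hπ : ∀ i, 0 < π i) (hπ1 : ∑ i, π i = 1)
    (hK : ∀ i, ‖K i - 1‖ ≤ β) (hβ : 0 ≤ β) (x : Fin N × Fin m → ℂ) :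
    piNormKron π (perpPart π (blockDiag' K *ᵥ x))
      ≤ β * ‖toLp 2 (colSum x)‖ + (1 + β) * piNormKron π (perpPart π x) := by
  have hπ0 : ∀ i, 0 ≤ π i := fun i => (hπ i).le
  set w := colSum x
  set u := perpPart π x
  have hdecomp : blockDiag' K *ᵥ x = piTensor π w
      + blockDiag' (fun i => K i - 1) *ᵥ piTensor π w + blockDiag' K *ᵥ u := by
    conv_lhs => rw [← piTensor_add_perpPart π x]
    rw [Matrix.mulVec_add, blockDiag'_mulVec_eq_add K (piTensor π w)]
  have hD : piNormKron π (blockDiag' (fun i => K i - 1) *ᵥ piTensor π w) ≤ β * ‖toLp 2 w‖ := by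
    rw [← piNormKron_piTensor hπ hπ1 w]
    refine piNormKron_le_of_norm_curry_le hπ0 hβ fun i => ?_
    rw [curry_blockDiag'_mulVec]
    exact (norm_toLp_mulVec_le _ _).trans (by gcongr; exact hK i)
  have hB : piNormKron π (blockDiag' K *ᵥ u) ≤ (1 + β) * piNormKron π u := by
    refine piNormKron_le_of_norm_curry_le hπ0 (by positivity) fun i => ?_
    have hKi : ‖K i‖ ≤ 1 + β :=
      calc ‖K i‖ = ‖(K i - 1) + 1‖ := by rw [sub_add_cancel]
        _ ≤ β + 1 := (norm_add_le _ _).trans (add_le_add (hK i) l2_opNorm_one_le)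
        _ = 1 + β := add_comm _ _
    rw [curry_blockDiag'_mulVec]
    exact (norm_toLp_mulVec_le _ _).trans (by gcongr)
  rw [hdecomp, perpPart_add, perpPart_add, perpPart_piTensor hπ1, zero_add]
  refine (piNormKron_add_le hπ0 _ _).trans (add_le_add ?_ ?_)
  · exact (piNormKron_perpPart_le hπ hπ1 _).trans hD
  · exact (piNormKron_perpPart_le hπ hπ1 _).trans hB

end Step

section Decomposition
variable {N m : ℕ} {π : Fin N → ℝ}

theorem colSum_eq_zero_of_perpU (hπ : ∀ i, π i ≠ 0) {x : Fin N × Fin m → ℂ} (hx : perpU π x) :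
    colSum x = 0 := by
  ext b
  have h := hx (Pi.single b 1)
  simp only [piInnerKron, Fintype.sum_prod_type, Complex.conj_ofReal, Pi.single_apply,
    apply_ite (starRingEnd ℂ), map_zero, mul_ite, mul_one, mul_zero, ite_mul, zero_mul, ite_div,
    zero_div, sum_ite_eq', mem_univ, if_true] at h
  simpa [colSum, mul_div_cancel_left₀ _ (Complex.ofReal_ne_zero.mpr (hπ _))] using h

theorem eq_piTensor_colSum_of_memU (hπ1 : ∑ i, π i = 1) {x y : Fin N × Fin m → ℂ}
    (hx : memU π x) (hy : colSum y = 0) : x = piTensor π (colSum (x + y)) := by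
  obtain ⟨w, hw⟩ := hx
  obtain rfl : x = piTensor π w := funext hw
  rw [colSum_add, hy, add_zero, colSum_piTensor hπ1]

end Decomposition

theorem le_mul_of_coupled_recurrence {a b : ℕ → ℝ} {α β q r K : ℝ} (hα : 0 ≤ α) (hβ : 0 ≤ β)
    (hq : 0 ≤ q) (hq1 : q < 1) (hr : 0 ≤ r) (hb0 : b 0 = 0)
    (ha : ∀ j, a (j + 1) ≤ α * a j + β * b j) (hb : ∀ j, b (j + 1) ≤ q * b j + r * a j)
    (hK : 0 ≤ K) {i : ℕ} (haK : ∀ j ≤ i, a j ≤ K) :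
    a (i + 1) ≤ (α + β * r / (1 - q)) * K := by
  have hq1' : 0 < 1 - q := by linarith
  -- `r / (1 - q)` is the fixed point of `c ↦ q * c + r`.
  have hbK : ∀ j ≤ i, b j ≤ r / (1 - q) * K := by
    intro j
    induction j with
    | zero => intro _; rw [hb0]; positivity
    | succ j ih =>
      intro hj
      calc b (j + 1) ≤ q * b j + r * a j := hb j
        _ ≤ q * (r / (1 - q) * K) + r * K := by
            gcongr
            exacts [ih (by omega), haK j (by omega)]
        _ = r / (1 - q) * K := by field_simp; ring
  calc a (i + 1) ≤ α * a i + β * b i := ha i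
    _ ≤ α * K + β * (r / (1 - q) * K) := by
        gcongr
        exacts [haK i le_rfl, hbK i le_rfl]
    _ = (α + β * r / (1 - q)) * K := by ring

theorem norm_colSum_iterate_le {N m : ℕ} {P : Matrix (Fin N) (Fin N) ℝ} {π : Fin N → ℝ}
    {K : Fin N → Matrix (Fin m) (Fin m) ℂ} {α β : ℝ} (hP : IsMarkov P) (hπ : IsStationaryMC P π)
    (hKmean : ‖∑ i, (π i : ℂ) • K i‖ ≤ α) (hK : ∀ i, ‖K i - 1‖ ≤ β) (hα : 0 ≤ α) (hβ : 0 ≤ β)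
    (hq : specExp P π * (1 + β) < 1) {z : ℕ → Fin N × Fin m → ℂ}
    (hz : ∀ j, z (j + 1) =
      (P.map Complex.ofReal ⊗ₖ (1 : Matrix (Fin m) (Fin m) ℂ))ᵀ *ᵥ (blockDiag' K *ᵥ z j))
    (hz0 : perpPart π (z 0) = 0) {i : ℕ} {M : ℝ} (hM : ∀ j ≤ i, ‖toLp 2 (colSum (z j))‖ ≤ M) :
    ‖toLp 2 (colSum (z (i + 1)))‖
      ≤ (α + β * (specExp P π * β) / (1 - specExp P π * (1 + β))) * M := by
  have hspec := specExp_nonneg P π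
  refine le_mul_of_coupled_recurrence (a := fun j => ‖toLp 2 (colSum (z j))‖)
    (b := fun j => piNormKron π (perpPart π (z j))) hα hβ (mul_nonneg hspec (by linarith)) hq
    (mul_nonneg hspec hβ) (by simp [hz0, piNormKron]) (fun j => ?_) (fun j => ?_)
    ((norm_nonneg _).trans (hM 0 i.zero_le)) hM
  · rw [hz, colSum_kronecker_transpose_mulVec hP.2]
    exact norm_colSum_blockDiag'_mulVec_le hπ.1 hπ.2.1 hKmean hK hβ _
  · rw [hz, perpPart_kronecker_transpose_mulVec hP.2 hπ.2.2]
    refine (piNormKron_kronecker_transpose_mulVec_le hP hπ (colSum_perpPart hπ.2.1 _)).trans ?_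
    exact (mul_le_mul_of_nonneg_left
      (piNormKron_perpPart_blockDiag'_mulVec_le hπ.1 hπ.2.1 hK hβ (z j)) hspec).trans_eq (by ring)

theorem norm_ofReal_smul_le_of_spectralNormMat_le {n : Type*} [Fintype n] [DecidableEq n]
    {H : Matrix n n ℂ} {t ℓ : ℝ} (ht : 0 ≤ t) (hH : spectralNormMat H ≤ ℓ) :
    ‖(t : ℂ) • H‖ ≤ t * ℓ := by
  rw [norm_smul, Complex.norm_real, Real.norm_of_nonneg ht]
  exact mul_le_mul_of_nonneg_left (l2_opNorm_le_of_spectralNormMat_le hH) ht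

end MatrixChernoff

open MatrixChernoff in
theorem stmt_17 {N m : ℕ}
    (P : Matrix (Fin N) (Fin N) ℝ) (π : Fin N → ℝ)
    (hP : IsMarkov P) (hπ : IsStationaryMC P π)
    (ℓ t : ℝ) (hℓ : 0 ≤ ℓ) (ht : 0 < t)
    (H : Fin N → Matrix (Fin m) (Fin m) ℂ)
    (hH : ∀ i, spectralNormMat (H i) ≤ ℓ)
    (hmean : ∑ i, π i • H i = 0)
    (hα₄ : specExp P π * Real.exp (t * ℓ) < 1)
    (z zpar zperp : ℕ → (Fin N × Fin m → ℂ))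
    (hz0perp : zperp 0 = 0)
    (hrec : ∀ i : ℕ, z (i + 1) =
      ((P.map Complex.ofReal) ⊗ₖ (1 : Matrix (Fin m) (Fin m) ℂ))ᵀ *ᵥ
        ((blockDiag' fun v => mexp ((t : ℂ) • H v))ᴴ *ᵥ z i))
    (hdec : ∀ i, z i = zpar i + zperp i)
    (hpar : ∀ i, memU π (zpar i)) (hperp : ∀ i, perpU π (zperp i)) :
    ∀ (i : ℕ) (hi : 1 ≤ i),
      piNormKron π (zpar i) ≤
        ((Real.exp (t * ℓ) - t * ℓ) + specExp P π * (Real.exp (t * ℓ) - 1) ^ 2 / (1 - specExp P π * Real.exp (t * ℓ))) *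
          (Finset.range i).sup' (Finset.nonempty_range_iff.mpr (by omega))
            (fun j => piNormKron π (zpar j)) := by
  have hπpos := hπ.1
  have hπ1 := hπ.2.1
  have htℓ := mul_nonneg ht.le hℓ
  have htH i := norm_ofReal_smul_le_of_spectralNormMat_le ht.le (hH i)
  have hmean' : ∑ i, (π i : ℂ) • ((t : ℂ) • H i) = 0 := by
    simp_rw [smul_comm _ (t : ℂ), ← Finset.smul_sum, Complex.coe_smul, hmean, smul_zero]
  have hzpar j : zpar j = piTensor π (colSum (z j)) := by
    rw [hdec j]
    exact eq_piTensor_colSum_of_memU hπ1 (hpar j)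
      (colSum_eq_zero_of_perpU (fun i => (hπpos i).ne') (hperp j))
  have hnorm j : piNormKron π (zpar j) = ‖WithLp.toLp 2 (colSum (z j))‖ := by
    rw [hzpar j, piNormKron_piTensor hπpos hπ1]
  intro i hi
  obtain ⟨i, rfl⟩ : ∃ k, i = k + 1 := ⟨i - 1, by omega⟩
  set M := (Finset.range (i + 1)).sup' _ fun j => piNormKron π (zpar j)
  have hM j (hj : j ≤ i) : ‖WithLp.toLp 2 (colSum (z j))‖ ≤ M :=
    hnorm j ▸ Finset.le_sup' (fun j => piNormKron π (zpar j)) (Finset.mem_range_succ_iff.mpr hj)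
  rw [hnorm]
  refine (norm_colSum_iterate_le hP hπ
    (norm_sum_smul_conjTranspose_mexp_le (fun i => (hπpos i).le) hπ1 htH hmean')
    (fun i => norm_conjTranspose_mexp_sub_one_le (htH i))
    (by linarith [Real.add_one_le_exp (t * ℓ)]) (by linarith [Real.add_one_le_exp (t * ℓ)])
    (by rwa [add_sub_cancel]) (fun j => by rw [hrec j, conjTranspose_blockDiag'])
    (by rw [perpPart, ← hzpar, hdec, add_sub_cancel_left, hz0perp])
    hM).trans_eq ?_
  rw [add_sub_cancel]
  ring
end

section
/- Let π be a probability vector on [N], let ℓ ≥ 0 and t > 0, and let H_1,…,H_N ∈ ℂ^{m×m} satisfy ‖H_i‖₂ ≤ ℓ for all i ∈ [N] and Σ_{i∈[N]} π_i H_i = 0. Then ‖ Σ_{i∈[N]} π_i exp(tH_i) ‖₂ ≤ exp(tℓ) − tℓ. -/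
open scoped BigOperators Kronecker ComplexOrder
open Matrix

/-- `π` is a stationary distribution of `P`: strictly positive entries, sums to 1, `πᵀ P = πᵀ`. -/
def IsStationaryDist {S : Type*} [Fintype S] (P : Matrix S S ℝ) (π : S → ℝ) : Prop :=
  (∀ i, 0 < π i) ∧ (∑ i, π i = 1) ∧ ∀ j, ∑ i, π i * P i j = π j

/-- The spectral (operator 2-)norm of a matrix. -/
noncomputable def matSpectralNorm {𝕜 : Type*} [RCLike 𝕜] {m n : Type*} [Fintype m] [Fintype n]
    (A : Matrix m n 𝕜) : ℝ :=
  sSup {r : ℝ | ∃ x : n → 𝕜, x ≠ 0 ∧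
    r = Real.sqrt (∑ i, ‖(A *ᵥ x) i‖ ^ 2) / Real.sqrt (∑ j, ‖x j‖ ^ 2)}

/-!
Since `∑ πᵢ Hᵢ = 0`, the linear terms of the exponential series cancel in the average:
`∑ πᵢ exp (t Hᵢ) = ∑ πᵢ (exp (t Hᵢ) - t Hᵢ)`. By submultiplicativity of the operator norm,
`‖exp B - B‖ ≤ ∑_{k ≠ 1} ‖B‖ᵏ / k! = exp ‖B‖ - ‖B‖`, and a convex combination of vectors
in a ball stays in that ball.
-/

namespace ContinuousLinearMap

variable {𝕜 𝕜₂ E F : Type*} [NontriviallyNormedField 𝕜] [NontriviallyNormedField 𝕜₂]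
  [NormedAddCommGroup E] [NormedAddCommGroup F] [NormedSpace 𝕜 E] [NormedSpace 𝕜₂ F]
  {σ : 𝕜 →+* 𝕜₂} [RingHomIsometric σ]

theorem sSup_ratio_eq_opNorm (f : E →SL[σ] F) :
    sSup {r : ℝ | ∃ x : E, x ≠ 0 ∧ r = ‖f x‖ / ‖x‖} = ‖f‖ := by
  have hle : ∀ r ∈ {r : ℝ | ∃ x : E, x ≠ 0 ∧ r = ‖f x‖ / ‖x‖}, r ≤ ‖f‖ := by
    rintro r ⟨x, -, rfl⟩
    exact f.ratio_le_opNorm x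
  refine le_antisymm (Real.sSup_le hle (norm_nonneg f)) ?_
  refine f.opNorm_le_bound' (Real.sSup_nonneg (by rintro r ⟨x, -, rfl⟩; positivity)) fun x hx => ?_
  rw [← div_le_iff₀ ((norm_nonneg x).lt_of_ne' hx)]
  exact le_csSup ⟨‖f‖, hle⟩ ⟨x, norm_ne_zero_iff.1 hx, rfl⟩

end ContinuousLinearMap

open scoped Matrix.Norms.L2Operator

section L2OpNorm

variable {𝕜 : Type*} [RCLike 𝕜] {m n : Type*} [Fintype m] [Fintype n] [DecidableEq n]

theorem matSpectralNorm_eq_l2_opNorm (A : Matrix m n 𝕜) : matSpectralNorm A = ‖A‖ := by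
  rw [l2_opNorm_def, ← ContinuousLinearMap.sSup_ratio_eq_opNorm, matSpectralNorm]
  congr 1
  ext r
  constructor
  · rintro ⟨x, hx, rfl⟩
    refine ⟨WithLp.toLp 2 x, by simpa using hx, ?_⟩
    simp [EuclideanSpace.norm_eq]
  · rintro ⟨x, hx, rfl⟩
    refine ⟨x.ofLp, by simpa using hx, ?_⟩
    simp [EuclideanSpace.norm_eq]

theorem Matrix.l2_opNorm_one_le : ‖(1 : Matrix n n 𝕜)‖ ≤ 1 := by
  rw [← l2_opNorm_toEuclideanCLM, map_one]
  exact ContinuousLinearMap.norm_id_le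

end L2OpNorm

-- `‖1‖ ≤ 1` rather than `NormOneClass 𝔸`, which fails for the zero ring of `0 × 0` matrices.
theorem norm_exp_sub_self_le (𝕂 : Type*) {𝔸 : Type*} [RCLike 𝕂] [NormedRing 𝔸]
    [NormedAlgebra 𝕂 𝔸] [CompleteSpace 𝔸] (h1 : ‖(1 : 𝔸)‖ ≤ 1) {x : 𝔸} {r : ℝ} (hx : ‖x‖ ≤ r) :
    ‖NormedSpace.exp x - x‖ ≤ Real.exp r - r := by
  have hx' : HasSum (Function.update (fun n => (n.factorial⁻¹ : 𝕂) • x ^ n) 1 0)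
      (NormedSpace.exp x - x) := by
    simpa [sub_eq_neg_add] using (NormedSpace.exp_series_hasSum_exp' (𝕂 := 𝕂) x).update 1 0
  have hr' : HasSum (Function.update (fun n => r ^ n / n.factorial) 1 0) (Real.exp r - r) := by
    simpa [sub_eq_neg_add, Real.exp_eq_exp_ℝ] using
      (NormedSpace.expSeries_div_hasSum_exp r).update 1 0
  refine hx'.norm_le_of_bounded hr' fun n => ?_
  rcases eq_or_ne n 1 with rfl | hn
  · simp
  have hpow : ‖x ^ n‖ ≤ r ^ n := by
    rcases Nat.eq_zero_or_pos n with rfl | hpos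
    · simpa using h1
    · exact (norm_pow_le' x hpos).trans (pow_le_pow_left₀ (norm_nonneg x) hx n)
  simp only [Function.update_of_ne hn, norm_smul, div_eq_inv_mul]
  simpa using mul_le_mul_of_nonneg_left hpow (by positivity : (0 : ℝ) ≤ (n.factorial : ℝ)⁻¹)

theorem norm_sum_smul_le_of_norm_le {ι E : Type*} [Fintype ι] [SeminormedAddCommGroup E]
    [NormedSpace ℝ E] {w : ι → ℝ} (hw₀ : ∀ i, 0 ≤ w i) (hw₁ : ∑ i, w i = 1) {x : ι → E} {C : ℝ}
    (hx : ∀ i, ‖x i‖ ≤ C) : ‖∑ i, w i • x i‖ ≤ C := by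
  simpa using (convex_closedBall (0 : E) C).sum_mem (fun i _ => hw₀ i) hw₁
    fun i _ => mem_closedBall_zero_iff.2 (hx i)

theorem mexp_eq_exp {m : Type*} [Fintype m] [DecidableEq m] (A : Matrix m m ℂ) :
    mexp A = NormedSpace.exp A := by
  rw [NormedSpace.exp_eq_tsum ℂ]
  rfl

theorem stmt_18_general {N m : ℕ} (π : Fin N → ℝ) (hπ : IsProbVec π)
    (ℓ t : ℝ) (ht : 0 < t)
    (H : Fin N → Matrix (Fin m) (Fin m) ℂ)
    (hH : ∀ i, matSpectralNorm (H i) ≤ ℓ)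
    (hmean : ∑ i, π i • H i = 0) :
    matSpectralNorm (∑ i, π i • mexp ((t : ℂ) • H i)) ≤ Real.exp (t * ℓ) - t * ℓ := by
  have htH : ∀ i, ‖(t : ℂ) • H i‖ ≤ t * ℓ := fun i => by
    rw [norm_smul, Complex.norm_real, Real.norm_of_nonneg ht.le, ← matSpectralNorm_eq_l2_opNorm]
    exact mul_le_mul_of_nonneg_left (hH i) ht.le
  have htmean : ∑ i, π i • ((t : ℂ) • H i) = 0 := by
    simp_rw [smul_comm (π _) (t : ℂ)]
    rw [← Finset.smul_sum, hmean, smul_zero]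
  rw [matSpectralNorm_eq_l2_opNorm, ← sub_zero (∑ i, _), ← htmean, ← Finset.sum_sub_distrib]
  simp_rw [← smul_sub, mexp_eq_exp]
  exact norm_sum_smul_le_of_norm_le hπ.1 hπ.2 fun i =>
    norm_exp_sub_self_le ℂ Matrix.l2_opNorm_one_le (htH i)

theorem stmt_18 {N m : ℕ} (π : Fin N → ℝ) (hπ : IsProbVec π)
    (ℓ t : ℝ) (hℓ : 0 ≤ ℓ) (ht : 0 < t)
    (H : Fin N → Matrix (Fin m) (Fin m) ℂ)
    (hH : ∀ i, matSpectralNorm (H i) ≤ ℓ)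
    (hmean : ∑ i, π i • H i = 0) :
    matSpectralNorm (∑ i, π i • mexp ((t : ℂ) • H i)) ≤ Real.exp (t * ℓ) - t * ℓ :=
  stmt_18_general π hπ ℓ t ht H hH hmean
end
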